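/- Let X follow the delay exponential distribution with parameters μ > 0, τ ≥ 0, 0 < μτ < 1/e. Then E[X] = 1/μ and Var(X) = (1 - 2μτ)/μ². -/

import Mathlib

open Real Set MeasureTheory

noncomputable def dexp (μ τ t : ℝ) : ℝ :=
  ∑' n : ℕ, (-μ) ^ n * (t - n * τ) ^ n / (Nat.factorial n) * (if (n : ℝ) * τ ≤ t then 1 else 0)

/-!
Write `f = dexp μ τ`. It vanishes on `(-∞, 0)`, equals `1` on `[0, τ)`, and on all of `ℝ` it has
right derivative `f' = -μ f(· - τ)`. With `κ = e μ` one has `μ e^{κτ} ≤ κ` exactly when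
`μτ ≤ 1/e`; comparing `f` with an exponential on one delay interval at a time then shows that
`e^{κt} f(t)` is nondecreasing on `[0, ∞)`. Hence `f > 0` there, so `f` is nonincreasing, so
`e^{μt} f(t)` is nonincreasing on `[τ, ∞)`, which gives `0 ≤ f(t) ≤ e^{μ(τ - t)}`.

This decay makes the moments finite and kills the boundary terms at infinity. Integrating by parts,
`∫ t^{k+1} μ f(t - τ) = (k + 1) ∫ t^k f(t)`, and the antiderivatives `-f(t + τ)/μ` of `f` and
`-t f(t + τ)/μ - f(t + 2τ)/μ²` of `t f(t)` give `∫ f = 1/μ` and `∫ t f(t) = (1 - μτ)/μ²`.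
-/

open Filter Topology Finset

theorem hasDerivWithinAt_sub_pow_mul_ite (a t : ℝ) (n : ℕ) :
    HasDerivWithinAt (fun s => (s - a) ^ n * if a ≤ s then (1 : ℝ) else 0)
      (n * (t - a) ^ (n - 1) * if a ≤ t then 1 else 0) (Ici t) t := by
  by_cases h : a ≤ t
  · have hpow : HasDerivAt (fun s => (s - a) ^ n) (n * (t - a) ^ (n - 1)) t :=
      ((hasDerivAt_pow n (t - a)).comp t ((hasDerivAt_id t).sub_const a)).congr_deriv (mul_one _)
    rw [if_pos h, mul_one]
    exact hpow.hasDerivWithinAt.congr (fun s hs => by simp [h.trans hs]) (by simp [h])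
  · have hzero : (fun s => (s - a) ^ n * if a ≤ s then (1 : ℝ) else 0) =ᶠ[𝓝 t] fun _ => 0 := by
      filter_upwards [Iio_mem_nhds (not_le.mp h)] with s hs
      rw [if_neg (not_le.mpr hs), mul_zero]
    simpa [h] using ((hasDerivAt_const t (0 : ℝ)).congr_of_eventuallyEq hzero).hasDerivWithinAt

theorem continuous_sub_pow_succ_mul_ite (a : ℝ) (n : ℕ) :
    Continuous fun s => (s - a) ^ (n + 1) * if a ≤ s then (1 : ℝ) else 0 := by
  have : (fun s => (s - a) ^ (n + 1) * if a ≤ s then (1 : ℝ) else 0) =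
      fun s => max (s - a) 0 ^ (n + 1) := by
    funext s
    by_cases h : a ≤ s
    · simp [h]
    · simp [h, max_eq_right (by linarith : s - a ≤ 0)]
  rw [this]
  fun_prop

variable {μ τ : ℝ}

noncomputable def dexpTerm (μ τ : ℝ) (n : ℕ) (t : ℝ) : ℝ :=
  (-μ) ^ n * (t - n * τ) ^ n / (Nat.factorial n) * (if (n : ℝ) * τ ≤ t then 1 else 0)

theorem dexp_eq_tsum (μ τ t : ℝ) : dexp μ τ t = ∑' n, dexpTerm μ τ n t := rfl

theorem dexpTerm_eq (μ τ : ℝ) (n : ℕ) :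
    dexpTerm μ τ n = fun t =>
      (-μ) ^ n / n.factorial * ((t - n * τ) ^ n * if (n : ℝ) * τ ≤ t then 1 else 0) := by
  funext t
  rw [dexpTerm]
  ring

theorem dexpTerm_zero_of_nonneg {t : ℝ} (ht : 0 ≤ t) : dexpTerm μ τ 0 t = 1 := by
  simp [dexpTerm, ht]

theorem hasDerivWithinAt_dexpTerm_zero (t : ℝ) :
    HasDerivWithinAt (dexpTerm μ τ 0) 0 (Ici t) t := by
  rw [dexpTerm_eq]
  simpa using (hasDerivWithinAt_sub_pow_mul_ite 0 t 0).const_mul (1 : ℝ)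

theorem hasDerivWithinAt_dexpTerm_succ (n : ℕ) (t : ℝ) :
    HasDerivWithinAt (dexpTerm μ τ (n + 1)) (-μ * dexpTerm μ τ n (t - τ)) (Ici t) t := by
  rw [dexpTerm_eq]
  refine ((hasDerivWithinAt_sub_pow_mul_ite _ t (n + 1)).const_mul _).congr_deriv ?_
  have hsub : t - ((n + 1 : ℕ) : ℝ) * τ = t - τ - n * τ := by push_cast; ring
  have hle : ((n + 1 : ℕ) : ℝ) * τ ≤ t ↔ (n : ℝ) * τ ≤ t - τ := by
    constructor <;> intro h <;> push_cast at h ⊢ <;> linarith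
  rw [dexpTerm, hsub, Nat.add_sub_cancel, Nat.factorial_succ]
  simp only [hle]
  push_cast
  field_simp
  ring

theorem continuousOn_dexpTerm (n : ℕ) : ContinuousOn (dexpTerm μ τ n) (Ici 0) := by
  cases n with
  | zero => exact continuousOn_const.congr fun t ht => dexpTerm_zero_of_nonneg ht
  | succ n =>
    rw [dexpTerm_eq]
    exact (continuous_const.mul (continuous_sub_pow_succ_mul_ite _ n)).continuousOn

theorem dexpTerm_eq_zero_of_lt {n : ℕ} {t : ℝ} (h : t < n * τ) : dexpTerm μ τ n t = 0 := by
  simp [dexpTerm, not_le.mpr h]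

theorem dexp_eq_sum_range (hτ : 0 ≤ τ) {N : ℕ} {t : ℝ} (ht : t < N * τ) :
    dexp μ τ t = ∑ n ∈ range N, dexpTerm μ τ n t := by
  rw [dexp_eq_tsum]
  refine tsum_eq_sum fun n hn => dexpTerm_eq_zero_of_lt (ht.trans_le ?_)
  gcongr
  exact_mod_cast not_lt.mp (mem_range.not.mp hn)

theorem dexp_eventuallyEq_sum_range (hτ : 0 ≤ τ) {N : ℕ} {t : ℝ} (ht : t < N * τ) :
    dexp μ τ =ᶠ[𝓝 t] fun s => ∑ n ∈ range N, dexpTerm μ τ n s := by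
  filter_upwards [Iio_mem_nhds ht] with s hs
  exact dexp_eq_sum_range hτ hs

theorem dexp_eq_zero_of_neg (hτ : 0 ≤ τ) {t : ℝ} (ht : t < 0) : dexp μ τ t = 0 := by
  simp [dexp_eq_sum_range (N := 0) hτ (by simpa using ht)]

theorem dexp_zero (hτ : 0 < τ) : dexp μ τ 0 = 1 := by
  simp [dexp_eq_sum_range (N := 1) hτ.le (by simpa using hτ), dexpTerm]

theorem dexp_of_mem_Icc (hτ : 0 < τ) {t : ℝ} (h1 : τ ≤ t) (h2 : t ≤ 2 * τ) :
    dexp μ τ t = 1 - μ * (t - τ) := by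
  rw [dexp_eq_sum_range (N := 3) hτ.le (by push_cast; linarith), sum_range_succ, sum_range_succ,
    sum_range_one]
  have hlast : dexpTerm μ τ 2 t = 0 := by
    rcases h2.lt_or_eq with h2 | rfl
    · exact dexpTerm_eq_zero_of_lt (by push_cast; linarith)
    · simp [dexpTerm]
  rw [hlast, dexpTerm, dexpTerm]
  norm_num [h1, hτ.le.trans h1, ← sub_eq_add_neg]

theorem exists_lt_nat_mul (hτ : 0 < τ) (t : ℝ) : ∃ N : ℕ, t < N * τ := by
  obtain ⟨N, hN⟩ := exists_nat_gt (t / τ)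
  exact ⟨N, (div_lt_iff₀ hτ).mp hN⟩

theorem hasDerivWithinAt_dexp (hτ : 0 < τ) (t : ℝ) :
    HasDerivWithinAt (dexp μ τ) (-μ * dexp μ τ (t - τ)) (Ici t) t := by
  obtain ⟨N, hN⟩ := exists_lt_nat_mul hτ (t - τ)
  have hN' : t < (N + 1 : ℕ) * τ := by push_cast; linarith
  have hsum : HasDerivWithinAt (fun s => ∑ n ∈ range (N + 1), dexpTerm μ τ n s)
      (-μ * dexp μ τ (t - τ)) (Ici t) t := by
    simp_rw [sum_range_succ']
    rw [dexp_eq_sum_range hτ.le hN, mul_sum, ← add_zero (∑ n ∈ range N, _)]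
    exact (HasDerivWithinAt.fun_sum fun n _ => hasDerivWithinAt_dexpTerm_succ n t).add
      (hasDerivWithinAt_dexpTerm_zero t)
  exact hsum.congr_of_eventuallyEq
    (nhdsWithin_le_nhds (dexp_eventuallyEq_sum_range hτ.le hN')) (dexp_eq_sum_range hτ.le hN')

theorem hasDerivWithinAt_dexp_comp_add (hτ : 0 < τ) (c t : ℝ) :
    HasDerivWithinAt (fun s => dexp μ τ (s + c)) (-μ * dexp μ τ (t + c - τ)) (Ici t) t := by
  have := (hasDerivWithinAt_dexp (μ := μ) hτ (t + c)).comp t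
    ((hasDerivAt_id t).add_const c).hasDerivWithinAt
    (fun s (hs : t ≤ s) => show t + c ≤ s + c by linarith)
  rwa [mul_one] at this

theorem continuousOn_dexp (hτ : 0 < τ) : ContinuousOn (dexp μ τ) (Ici 0) := by
  intro t ht
  obtain ⟨N, hN⟩ := exists_lt_nat_mul hτ t
  exact ((continuousOn_finsetSum _ fun n _ => continuousOn_dexpTerm n) t ht).congr_of_eventuallyEq
    (nhdsWithin_le_nhds (dexp_eventuallyEq_sum_range hτ.le hN)) (dexp_eq_sum_range hτ.le hN)

theorem measurable_dexp (hτ : 0 < τ) : Measurable (dexp μ τ) := by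
  classical
  convert (continuousOn_dexp (μ := μ) hτ).measurable_piecewise continuousOn_const
    measurableSet_Ici (g := fun _ => 0) using 1
  funext t
  by_cases ht : 0 ≤ t
  · simp [ht]
  · simp [ht, dexp_eq_zero_of_neg hτ.le (not_le.mp ht)]

theorem le_of_hasDerivWithinAt_Ici_nonpos {f f' : ℝ → ℝ} {a b : ℝ} (hab : a ≤ b)
    (hf : ContinuousOn f (Icc a b)) (hf' : ∀ x ∈ Ico a b, HasDerivWithinAt f (f' x) (Ici x) x)
    (hneg : ∀ x ∈ Ico a b, f' x ≤ 0) : f b ≤ f a :=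
  image_le_of_deriv_right_le_deriv_boundary (B := fun _ => f a) hf hf' le_rfl continuousOn_const
    (fun _ _ => hasDerivWithinAt_const _ _ _) hneg ⟨hab, le_rfl⟩

theorem exp_mul_dexp_le_of_delayed_le {κ r s : ℝ} (hμ : 0 ≤ μ) (hτ : 0 < τ)
    (hκ : μ * exp (κ * τ) ≤ κ) (hr : 0 ≤ r) (hrs : r ≤ s) (hr0 : 0 ≤ dexp μ τ r)
    (hdelay : ∀ u ∈ Ico r s,
      exp (κ * (u - τ)) * dexp μ τ (u - τ) ≤ exp (κ * r) * dexp μ τ r) :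
    exp (κ * r) * dexp μ τ r ≤ exp (κ * s) * dexp μ τ s := by
  set L : ℝ → ℝ := fun u => exp (κ * (r - u)) * dexp μ τ r
  have hL : ∀ u, HasDerivAt L (-κ * L u) u := fun u => by
    have := ((hasDerivAt_id u).const_sub r).const_mul κ |>.exp |>.mul_const (dexp μ τ r)
    exact this.congr_deriv (by simp only [L, id]; ring)
  have hcont : ContinuousOn (fun u => L u - dexp μ τ u) (Icc r s) :=
    (Continuous.continuousOn (by fun_prop)).sub
      ((continuousOn_dexp hτ).mono fun u hu => hr.trans hu.1)
  have hmain := le_of_hasDerivWithinAt_Ici_nonpos hrs hcont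
    (fun u _ => (hL u).hasDerivWithinAt.sub (hasDerivWithinAt_dexp hτ u)) fun u hu => by
      have hsplit : exp (κ * (u - τ)) * (exp (κ * τ) * L u) = exp (κ * r) * dexp μ τ r := by
        simp only [L, ← mul_assoc, ← exp_add]
        ring_nf
      have hdelay' : dexp μ τ (u - τ) ≤ exp (κ * τ) * L u :=
        le_of_mul_le_mul_left ((hdelay u hu).trans_eq hsplit.symm) (exp_pos _)
      have hL0 : 0 ≤ L u := by positivity
      nlinarith [mul_le_mul_of_nonneg_left hdelay' hμ, mul_le_mul_of_nonneg_right hκ hL0]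
  have hLs : exp (κ * s) * L s = exp (κ * r) * dexp μ τ r := by
    simp only [L, ← mul_assoc, ← exp_add]
    ring_nf
  simp only [L, sub_self, mul_zero, exp_zero, one_mul] at hmain
  rw [← hLs]
  exact mul_le_mul_of_nonneg_left (by linarith) (exp_pos _).le

theorem monotoneOn_exp_mul_dexp_Icc_add {κ a : ℝ} (hμ : 0 ≤ μ) (hτ : 0 < τ)
    (hκ : μ * exp (κ * τ) ≤ κ) (ha : 0 ≤ a)
    (hmono : MonotoneOn (fun t => exp (κ * t) * dexp μ τ t) (Icc 0 a)) :
    MonotoneOn (fun t => exp (κ * t) * dexp μ τ t) (Icc 0 (a + τ)) := by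
  set H : ℝ → ℝ := fun t => exp (κ * t) * dexp μ τ t
  have hH0 : H 0 = 1 := by simp [H, dexp_zero hτ]
  have hHa : 1 ≤ H a := hH0 ▸ hmono ⟨le_rfl, ha⟩ ⟨ha, le_rfl⟩ ha
  have nonneg_of_le : ∀ {r}, 1 ≤ H r → 0 ≤ dexp μ τ r := fun h =>
    (pos_of_mul_pos_right (one_pos.trans_le h) (exp_pos _).le).le
  have hdelay : ∀ u ≤ a + τ, H (u - τ) ≤ H a := by
    intro u hu
    rcases lt_or_ge (u - τ) 0 with hneg | hnonneg
    · simp only [H, dexp_eq_zero_of_neg hτ.le hneg, mul_zero]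
      linarith
    · exact hmono ⟨hnonneg, by linarith⟩ ⟨ha, le_rfl⟩ (by linarith)
  have hfrom_a : ∀ s ∈ Icc a (a + τ), H a ≤ H s := fun s hs =>
    exp_mul_dexp_le_of_delayed_le hμ hτ hκ ha hs.1 (nonneg_of_le hHa)
      fun u hu => hdelay u (by linarith [hu.2, hs.2])
  intro r hr s hs hrs
  rcases le_or_gt s a with hsa | has
  · exact hmono ⟨hr.1, hrs.trans hsa⟩ ⟨hs.1, hsa⟩ hrs
  rcases le_or_gt r a with hra | har
  · exact (hmono ⟨hr.1, hra⟩ ⟨ha, le_rfl⟩ hra).trans (hfrom_a s ⟨has.le, hs.2⟩)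
  · have hHr := hfrom_a r ⟨har.le, hr.2⟩
    exact exp_mul_dexp_le_of_delayed_le hμ hτ hκ hr.1 hrs (nonneg_of_le (hHa.trans hHr))
      fun u hu => (hdelay u (by linarith [hu.2, hs.2])).trans hHr

theorem monotoneOn_exp_mul_dexp {κ : ℝ} (hμ : 0 ≤ μ) (hτ : 0 < τ)
    (hκ : μ * exp (κ * τ) ≤ κ) :
    MonotoneOn (fun t => exp (κ * t) * dexp μ τ t) (Ici 0) := by
  have hk : ∀ k : ℕ, MonotoneOn (fun t => exp (κ * t) * dexp μ τ t) (Icc 0 (k * τ)) := by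
    intro k
    induction k with
    | zero => simp
    | succ k ih =>
      simpa [add_mul] using monotoneOn_exp_mul_dexp_Icc_add hμ hτ hκ (by positivity) ih
  intro r hr s hs hrs
  obtain ⟨k, hk'⟩ := exists_lt_nat_mul hτ s
  exact hk k ⟨hr, hrs.trans hk'.le⟩ ⟨hs, hk'.le⟩ hrs

theorem dexp_pos (hμ : 0 ≤ μ) (hτ : 0 < τ) (hμτ : μ * τ ≤ (exp 1)⁻¹) {t : ℝ} (ht : 0 ≤ t) :
    0 < dexp μ τ t := by
  have hκ : μ * exp (exp 1 * μ * τ) ≤ exp 1 * μ := by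
    have : exp 1 * μ * τ ≤ 1 := by
      rw [mul_assoc, ← le_div_iff₀' (exp_pos 1), one_div]
      exact hμτ
    nlinarith [exp_le_exp.mpr this]
  have h := monotoneOn_exp_mul_dexp hμ hτ hκ self_mem_Ici ht ht
  simp only [mul_zero, exp_zero, dexp_zero hτ, one_mul] at h
  exact pos_of_mul_pos_right (one_pos.trans_le h) (exp_pos _).le

theorem dexp_nonneg (hμ : 0 ≤ μ) (hτ : 0 < τ) (hμτ : μ * τ ≤ (exp 1)⁻¹) (t : ℝ) :
    0 ≤ dexp μ τ t := by
  rcases lt_or_ge t 0 with ht | ht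
  · exact (dexp_eq_zero_of_neg hτ.le ht).ge
  · exact (dexp_pos hμ hτ hμτ ht).le

theorem antitoneOn_dexp (hμ : 0 ≤ μ) (hτ : 0 < τ) (hμτ : μ * τ ≤ (exp 1)⁻¹) :
    AntitoneOn (dexp μ τ) (Ici 0) := fun r hr s _ hrs =>
  le_of_hasDerivWithinAt_Ici_nonpos hrs ((continuousOn_dexp hτ).mono fun _ hu => hr.trans hu.1)
    (fun u _ => hasDerivWithinAt_dexp hτ u) fun u _ => by
      nlinarith [dexp_nonneg hμ hτ hμτ (u - τ)]

theorem dexp_le_exp (hμ : 0 ≤ μ) (hτ : 0 < τ) (hμτ : μ * τ ≤ (exp 1)⁻¹) (t : ℝ) :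
    dexp μ τ t ≤ exp (μ * (τ - t)) := by
  rcases lt_or_ge t 0 with ht | ht
  · exact (dexp_eq_zero_of_neg hτ.le ht).trans_le (exp_pos _).le
  rcases le_or_gt t τ with htτ | htτ
  · calc dexp μ τ t ≤ dexp μ τ 0 := antitoneOn_dexp hμ hτ hμτ self_mem_Ici ht ht
      _ = 1 := dexp_zero hτ
      _ ≤ exp (μ * (τ - t)) := one_le_exp (by nlinarith)
  have hdecr := le_of_hasDerivWithinAt_Ici_nonpos (f := fun u => exp (μ * u) * dexp μ τ u)
    htτ.le (Continuous.continuousOn (by fun_prop) |>.mul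
      ((continuousOn_dexp hτ).mono fun u hu => hτ.le.trans hu.1))
    (fun u _ => (((hasDerivAt_id u).const_mul μ).exp.hasDerivWithinAt).mul
      (hasDerivWithinAt_dexp hτ u)) fun u hu => by
      have := antitoneOn_dexp hμ hτ hμτ (show 0 ≤ u - τ by linarith [hu.1])
        (show 0 ≤ u by linarith [hu.1]) (by linarith : u - τ ≤ u)
      simp only [id, mul_one]
      nlinarith [mul_le_mul_of_nonneg_left this (mul_nonneg hμ (exp_pos (μ * u)).le)]
  have hτ1 : dexp μ τ τ = 1 := by simpa using dexp_of_mem_Icc (μ := μ) hτ le_rfl (by linarith)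
  rw [hτ1, mul_one] at hdecr
  rw [mul_sub, exp_sub, le_div_iff₀ (exp_pos _), mul_comm]
  exact hdecr

theorem pow_mul_dexp_add_le (hμ : 0 ≤ μ) (hτ : 0 < τ) (hμτ : μ * τ ≤ (exp 1)⁻¹) (k : ℕ)
    {c t : ℝ} (ht : 0 ≤ t) :
    t ^ k * dexp μ τ (t + c) ≤ exp (μ * (τ - c)) * (t ^ k * exp (-μ * t)) :=
  calc t ^ k * dexp μ τ (t + c) ≤ t ^ k * exp (μ * (τ - (t + c))) :=
        mul_le_mul_of_nonneg_left (dexp_le_exp hμ hτ hμτ _) (pow_nonneg ht k)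
    _ = exp (μ * (τ - c)) * (t ^ k * exp (-μ * t)) := by
        rw [mul_left_comm, ← exp_add]
        ring_nf

theorem tendsto_pow_mul_dexp_atTop (hμ : 0 < μ) (hτ : 0 < τ) (hμτ : μ * τ ≤ (exp 1)⁻¹)
    (k : ℕ) (c : ℝ) : Tendsto (fun t => t ^ k * dexp μ τ (t + c)) atTop (𝓝 0) := by
  have hdecay : Tendsto (fun t : ℝ => exp (μ * (τ - c)) * (t ^ k * exp (-μ * t))) atTop (𝓝 0) := by
    simpa using (tendsto_rpow_mul_exp_neg_mul_atTop_nhds_zero k μ hμ).const_mul (exp (μ * (τ - c)))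
  refine squeeze_zero' ?_ ?_ hdecay <;> filter_upwards [eventually_ge_atTop 0] with t ht
  · exact mul_nonneg (pow_nonneg ht k) (dexp_nonneg hμ.le hτ hμτ _)
  · exact pow_mul_dexp_add_le hμ.le hτ hμτ k ht

theorem integrableOn_pow_mul_dexp (hμ : 0 < μ) (hτ : 0 < τ) (hμτ : μ * τ ≤ (exp 1)⁻¹)
    (k : ℕ) (c : ℝ) : IntegrableOn (fun t => t ^ k * dexp μ τ (t + c)) (Ioi 0) := by
  have hdecay : IntegrableOn (fun t : ℝ => t ^ k * exp (-μ * t)) (Ioi 0) := by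
    simpa using integrableOn_rpow_mul_exp_neg_mul_rpow (s := k) (p := 1)
      (by linarith [(Nat.cast_nonneg k : (0 : ℝ) ≤ k)]) one_pos hμ
  have hmeas := measurable_dexp (μ := μ) hτ
  refine (hdecay.const_mul (exp (μ * (τ - c)))).mono' (by fun_prop) ?_
  filter_upwards [ae_restrict_mem measurableSet_Ioi] with t (ht : 0 < t)
  rw [norm_of_nonneg (mul_nonneg (pow_nonneg ht.le k) (dexp_nonneg hμ.le hτ hμτ _))]
  exact pow_mul_dexp_add_le hμ.le hτ hμτ k ht.le

theorem integral_Ioi_of_hasDerivWithinAt_Ici_of_tendsto {f f' : ℝ → ℝ} {a m : ℝ}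
    (hcont : ContinuousOn f (Ici a)) (hderiv : ∀ x ∈ Ioi a, HasDerivWithinAt f (f' x) (Ici x) x)
    (f'int : IntegrableOn f' (Ioi a)) (hf : Tendsto f atTop (𝓝 m)) :
    ∫ x in Ioi a, f' x = m - f a := by
  refine tendsto_nhds_unique (intervalIntegral_tendsto_integral_Ioi a f'int tendsto_id) ?_
  refine (hf.sub_const _).congr' ?_
  filter_upwards [eventually_ge_atTop a] with b hb
  rw [id, intervalIntegral.integral_eq_sub_of_hasDeriv_right_of_le hb
    (hcont.mono Icc_subset_Ici_self) (fun x hx => (hderiv x hx.1).mono Ioi_subset_Ici_self)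
    ((intervalIntegrable_iff_integrableOn_Ioc_of_le hb).mpr (f'int.mono_set Ioc_subset_Ioi_self))]

theorem continuousOn_dexp_comp_add (hτ : 0 < τ) {c : ℝ} (hc : 0 ≤ c) :
    ContinuousOn (fun t => dexp μ τ (t + c)) (Ici 0) :=
  (continuousOn_dexp hτ).comp (continuous_add_const c).continuousOn
    fun t (ht : 0 ≤ t) => show 0 ≤ t + c by linarith

theorem integral_dexp (hμ : 0 < μ) (hτ : 0 < τ) (hμτ : μ * τ ≤ (exp 1)⁻¹) :
    ∫ t in Ioi 0, dexp μ τ t = μ⁻¹ := by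
  have h := integral_Ioi_of_hasDerivWithinAt_Ici_of_tendsto
    (f := fun t => -μ⁻¹ * dexp μ τ (t + τ)) (f' := dexp μ τ)
    (continuousOn_const.mul (continuousOn_dexp_comp_add hτ hτ.le))
    (fun t _ => ((hasDerivWithinAt_dexp_comp_add hτ τ t).const_mul (-μ⁻¹)).congr_deriv
      (by rw [add_sub_cancel_right]; field_simp))
    (by simpa using integrableOn_pow_mul_dexp hμ hτ hμτ 0 0)
    (by simpa using (tendsto_pow_mul_dexp_atTop hμ hτ hμτ 0 τ).const_mul (-μ⁻¹))
  simpa [dexp_of_mem_Icc hτ le_rfl (by linarith : τ ≤ 2 * τ)] using h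

theorem integral_mul_dexp (hμ : 0 < μ) (hτ : 0 < τ) (hμτ : μ * τ ≤ (exp 1)⁻¹) :
    ∫ t in Ioi 0, t * dexp μ τ t = (1 - μ * τ) / μ ^ 2 := by
  have h := integral_Ioi_of_hasDerivWithinAt_Ici_of_tendsto
    (f := fun t => -μ⁻¹ * (t * dexp μ τ (t + τ)) - μ⁻¹ ^ 2 * dexp μ τ (t + 2 * τ))
    (f' := fun t => t * dexp μ τ t)
    ((continuousOn_const.mul (continuousOn_id.mul (continuousOn_dexp_comp_add hτ hτ.le))).sub
      (continuousOn_const.mul (continuousOn_dexp_comp_add hτ (by linarith))))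
    (fun t _ => ((((hasDerivAt_id t).hasDerivWithinAt.mul
      (hasDerivWithinAt_dexp_comp_add hτ τ t)).const_mul (-μ⁻¹)).sub
      ((hasDerivWithinAt_dexp_comp_add hτ (2 * τ) t).const_mul (μ⁻¹ ^ 2))).congr_deriv (by
        rw [add_sub_cancel_right, show t + 2 * τ - τ = t + τ by ring, id]
        field_simp
        ring))
    (by simpa using integrableOn_pow_mul_dexp hμ hτ hμτ 1 0)
    (m := 0) (by
      simpa only [pow_one, pow_zero, one_mul, mul_zero, sub_zero] using
        ((tendsto_pow_mul_dexp_atTop hμ hτ hμτ 1 τ).const_mul (-μ⁻¹)).sub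
          ((tendsto_pow_mul_dexp_atTop hμ hτ hμτ 0 (2 * τ)).const_mul (μ⁻¹ ^ 2)))
  rw [h, zero_add, zero_add, dexp_of_mem_Icc hτ (by linarith) le_rfl]
  field_simp
  ring

theorem integral_pow_succ_mul_dexp_sub (hμ : 0 < μ) (hτ : 0 < τ) (hμτ : μ * τ ≤ (exp 1)⁻¹)
    (k : ℕ) :
    ∫ t in Ioi 0, t ^ (k + 1) * (μ * dexp μ τ (t - τ))
      = (k + 1) * ∫ t in Ioi 0, t ^ k * dexp μ τ t := by
  have hdensity : IntegrableOn (fun t => t ^ (k + 1) * (μ * dexp μ τ (t - τ))) (Ioi 0) := by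
    refine IntegrableOn.congr_fun ((integrableOn_pow_mul_dexp hμ hτ hμτ (k + 1) (-τ)).const_mul μ)
      (fun t _ => ?_) measurableSet_Ioi
    rw [← sub_eq_add_neg, mul_left_comm]
  have hsurvival : IntegrableOn (fun t => (k + 1) * (t ^ k * dexp μ τ t)) (Ioi 0) := by
    refine IntegrableOn.congr_fun
      ((integrableOn_pow_mul_dexp hμ hτ hμτ k 0).const_mul ((k : ℝ) + 1)) (fun t _ => ?_)
      measurableSet_Ioi
    rw [add_zero]
  have h := integral_Ioi_of_hasDerivWithinAt_Ici_of_tendsto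
    (f := fun t => -(t ^ (k + 1) * dexp μ τ t))
    (f' := fun t => t ^ (k + 1) * (μ * dexp μ τ (t - τ)) - (k + 1) * (t ^ k * dexp μ τ t))
    (((continuous_pow (k + 1)).continuousOn.mul (continuousOn_dexp hτ)).neg)
    (fun t _ => ((hasDerivAt_pow (k + 1) t).hasDerivWithinAt.mul
      (hasDerivWithinAt_dexp hτ t)).neg.congr_deriv (by push_cast; ring))
    (hdensity.sub hsurvival)
    (by simpa using (tendsto_pow_mul_dexp_atTop hμ hτ hμτ (k + 1) 0).neg)
  rw [integral_sub hdensity hsurvival, integral_const_mul, zero_pow k.succ_ne_zero, zero_mul,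
    neg_zero, sub_zero] at h
  exact sub_eq_zero.mp h

theorem dexp_mean_and_variance_general (μ τ : ℝ) (hμ : 0 < μ)
    (hμτ0 : 0 < μ * τ) (hμτ : μ * τ < (Real.exp 1)⁻¹) :
    (∫ t in Ioi (0 : ℝ), t * (μ * dexp μ τ (t - τ))) = μ⁻¹ ∧
    (∫ t in Ioi (0 : ℝ), t ^ 2 * (μ * dexp μ τ (t - τ)))
        - (∫ t in Ioi (0 : ℝ), t * (μ * dexp μ τ (t - τ))) ^ 2
      = (1 - 2 * μ * τ) / μ ^ 2 := by
  have hτ : 0 < τ := pos_of_mul_pos_right hμτ0 hμ.le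
  have hmean : ∫ t in Ioi (0 : ℝ), t * (μ * dexp μ τ (t - τ)) = μ⁻¹ := by
    simpa [integral_dexp hμ hτ hμτ.le] using integral_pow_succ_mul_dexp_sub hμ hτ hμτ.le 0
  have hsecond :
      ∫ t in Ioi (0 : ℝ), t ^ 2 * (μ * dexp μ τ (t - τ)) = 2 * ((1 - μ * τ) / μ ^ 2) := by
    rw [integral_pow_succ_mul_dexp_sub hμ hτ hμτ.le 1]
    simp only [pow_one, integral_mul_dexp hμ hτ hμτ.le]
    norm_num
  refine ⟨hmean, ?_⟩
  rw [hsecond, hmean]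
  field_simp
  ring

/-- A delay-exponentially distributed random variable `X` (with density
`ψ(t) = μ dexp(-μ(t-τ); -μτ)` on `[0, ∞)`) has mean `E[X] = 1/μ` and variance
`Var(X) = E[X²] - E[X]² = (1 - 2μτ)/μ²`. -/
theorem dexp_mean_and_variance (μ τ : ℝ) (hμ : 0 < μ) (hτ : 0 ≤ τ)
    (hμτ0 : 0 < μ * τ) (hμτ : μ * τ < (Real.exp 1)⁻¹) :
    (∫ t in Ioi (0 : ℝ), t * (μ * dexp μ τ (t - τ))) = μ⁻¹ ∧
    (∫ t in Ioi (0 : ℝ), t ^ 2 * (μ * dexp μ τ (t - τ)))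
        - (∫ t in Ioi (0 : ℝ), t * (μ * dexp μ τ (t - τ))) ^ 2
      = (1 - 2 * μ * τ) / μ ^ 2 :=
  dexp_mean_and_variance_general μ τ hμ hμτ0 hμτ
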